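/- arXiv:math/0501188 — 9 statements merged into one kernel-verified Lean document; each statement's English description precedes it below -/
import Mathlib

section
/- For all real numbers H and c, the profile function f(t; H, c) is smooth on (0, ∞) and satisfies the ordinary differential equation t f''(t) + (1 − f'(t)²) f'(t) = 2 H t (1 − f'(t)²)^{3/2} for every t > 0; that is, the rotational spacelike surface X(t, θ) = (t cos θ, t sin θ, f(t)) has constant mean curvature H with respect to the future-directed orientation. -/
open Real MeasureTheory Filter Set

/-- The derivative `h(t; H, c) = (H t² − c)/√(t² + (H t² − c)²)` of the profile curve of a
rotational spacelike surface with constant mean curvature `H` and first-integral constant `c`. -/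
noncomputable def hfun (H c t : ℝ) : ℝ :=
  (H * t ^ 2 - c) / Real.sqrt (t ^ 2 + (H * t ^ 2 - c) ^ 2)

/-- The profile function `f(t; H, c) = a + ∫_r^t h(s; H, c) ds` with initial value `f(r) = a`,
whose rotational graph `X(t, θ) = (t cos θ, t sin θ, f(t))` has constant mean curvature `H`. -/
noncomputable def ffun (H c r a t : ℝ) : ℝ :=
  a + ∫ s in r..t, hfun H c s

lemma Upos (H c t : ℝ) (ht : 0 < t) : 0 < t ^ 2 + (H * t ^ 2 - c) ^ 2 := by positivity

lemma hfun_contDiffAt (H c t : ℝ) (ht : 0 < t) : ContDiffAt ℝ (⊤ : WithTop ℕ∞) (hfun H c) t := by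
  have hq : ContDiffAt ℝ (⊤ : WithTop ℕ∞) (fun t : ℝ => H * t ^ 2 - c) t := by fun_prop
  have hu : ContDiffAt ℝ (⊤ : WithTop ℕ∞) (fun t : ℝ => t ^ 2 + (H * t ^ 2 - c) ^ 2) t := by fun_prop
  have hs : ContDiffAt ℝ (⊤ : WithTop ℕ∞) (fun t : ℝ => Real.sqrt (t ^ 2 + (H * t ^ 2 - c) ^ 2)) t :=
    (Real.contDiffAt_sqrt (Upos H c t ht).ne').comp t hu
  exact hq.div hs (by positivity)

lemma hfun_contOn (H c : ℝ) : ContinuousOn (hfun H c) (Set.Ioi 0) := fun x hx =>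
  ((hfun_contDiffAt H c x hx).continuousAt).continuousWithinAt

lemma ffun_hasDerivAt (H c r a : ℝ) (hr : 0 < r) {t : ℝ} (ht : 0 < t) :
    HasDerivAt (ffun H c r a) (hfun H c t) t := by
  have hsub : Set.uIcc r t ⊆ Set.Ioi (0:ℝ) := by
    intro x hx
    simp only [Set.mem_Ioi]
    calc (0:ℝ) < min r t := lt_min hr ht
      _ ≤ x := hx.1
  have hint : IntervalIntegrable (hfun H c) volume r t :=
    ((hfun_contOn H c).mono hsub).intervalIntegrable
  have hmeas : StronglyMeasurableAtFilter (hfun H c) (nhds t) volume :=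
    (hfun_contOn H c).stronglyMeasurableAtFilter isOpen_Ioi t ht
  have hcont : ContinuousAt (hfun H c) t := (hfun_contDiffAt H c t ht).continuousAt
  exact (intervalIntegral.integral_hasDerivAt_right hint hmeas hcont).const_add a

lemma ffun_deriv_eq (H c r a : ℝ) (hr : 0 < r) {t : ℝ} (ht : 0 < t) :
    deriv (ffun H c r a) t = hfun H c t :=
  (ffun_hasDerivAt H c r a hr ht).deriv

/-- A function with an analytic derivative (near a point) is analytic at that point. -/
lemma analyticAt_of_hasDerivAt {g f : ℝ → ℝ} {x₀ : ℝ} (hg : AnalyticAt ℝ g x₀)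
    (hf : ∀ᶠ x in nhds x₀, HasDerivAt f (g x) x) : AnalyticAt ℝ f x₀ := by
  obtain ⟨p, R, hR⟩ := hg
  obtain ⟨r', hr'pos, hr'R⟩ : ∃ r' : NNReal, 0 < r' ∧ (r' : ENNReal) < R := by
    rcases ENNReal.lt_iff_exists_nnreal_btwn.1 hR.r_pos with ⟨r', h1, h2⟩
    exact ⟨r', by exact_mod_cast h1, h2⟩
  have hr'rad : (r' : ENNReal) < p.radius := hr'R.trans_le hR.r_le
  obtain ⟨C, hC0, hC⟩ := p.norm_mul_pow_le_of_lt_radius hr'rad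
  have hr'0 : (0:ℝ) < (r' : ℝ) := hr'pos
  -- coefficients of the primitive power series
  set c : ℕ → ℝ := fun n => Nat.casesOn n 0 (fun m => p.coeff m / (m + 1)) with hc
  set q := FormalMultilinearSeries.ofScalars ℝ c with hq
  have hcoeff_le : ∀ m : ℕ, |c (m + 1)| ≤ ‖p m‖ := by
    intro m
    have h1 : c (m + 1) = p.coeff m / (m + 1) := rfl
    rw [h1, p.norm_apply_eq_norm_coef, Real.norm_eq_abs, abs_div]
    have h2 : (1:ℝ) ≤ |(m : ℝ) + 1| := by
      rw [abs_of_nonneg (by positivity)]; exact le_add_of_nonneg_left (Nat.cast_nonneg m)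
    calc |p.coeff m| / |(m:ℝ) + 1| ≤ |p.coeff m| / 1 := by
          apply div_le_div_of_nonneg_left (abs_nonneg _) one_pos h2 |>.trans_eq rfl
      _ = |p.coeff m| := div_one _
  have hqrad : (r' : ENNReal) ≤ q.radius := by
    apply q.le_radius_of_bound (C * r')
    intro n
    rw [FormalMultilinearSeries.ofScalars_norm]
    cases n with
    | zero =>
      have h0 : c 0 = 0 := rfl
      rw [h0]
      simp only [norm_zero, zero_mul]
      positivity
    | succ m =>
      have h3 : ‖c (m+1)‖ * (r':ℝ) ^ (m+1) ≤ ‖p m‖ * (r':ℝ) ^ m * (r':ℝ) := by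
        rw [Real.norm_eq_abs, pow_succ, ← mul_assoc]
        gcongr
        exact hcoeff_le m
      exact h3.trans (by gcongr; exact hC m)
  have hq0 : 0 < q.radius := lt_of_lt_of_le (by exact_mod_cast hr'pos) hqrad
  have hF0 : AnalyticAt ℝ (fun x => q.sum (x - x₀)) x₀ := by
    have h2 : AnalyticAt ℝ (fun x : ℝ => x - x₀) x₀ := analyticAt_id.sub analyticAt_const
    have h1 : AnalyticAt ℝ q.sum (x₀ - x₀) := by
      rw [sub_self]
      exact (q.hasFPowerSeriesOnBall hq0).analyticAt
    have h3 := AnalyticAt.comp (g := q.sum) (f := fun x : ℝ => x - x₀) h1 h2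
    exact h3
  -- choose a radius where everything works
  obtain ⟨ε, hεpos, hball⟩ : ∃ ε > 0, ∀ y ∈ Metric.ball x₀ ε, HasDerivAt f (g y) y :=
    Metric.eventually_nhds_iff_ball.1 hf
  set ρ : ℝ := min (ε/2) ((r':ℝ)/2) with hρ
  have hρpos : 0 < ρ := lt_min (by positivity) (by positivity)
  have hρε : ρ < ε := (min_le_left _ _).trans_lt (by linarith)
  have hρr' : ρ < (r':ℝ) := (min_le_right _ _).trans_lt (by linarith)
  -- the series and its term-by-term derivative
  set G : ℕ → ℝ → ℝ := fun n x => c n * (x - x₀) ^ n with hG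
  set G' : ℕ → ℝ → ℝ := fun n x => c n * (n * (x - x₀) ^ (n - 1)) with hG'
  have hGd : ∀ n x, HasDerivAt (G n) (G' n x) x := by
    intro n x
    have h := (((hasDerivAt_id x).sub_const x₀).pow n).const_mul (c n)
    simpa [hG, hG', mul_comm, mul_assoc, mul_left_comm] using h
  have hG'succ : ∀ (m : ℕ) (x : ℝ), G' (m+1) x = p.coeff m * (x - x₀) ^ m := by
    intro m x
    have h1 : G' (m+1) x = p.coeff m / (m+1) * ((m+1) * (x - x₀) ^ m) := by
      simp [hG', hc]
    rw [h1]
    have h2 : ((m:ℝ) + 1) ≠ 0 := by positivity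
    field_simp
  set u : ℕ → ℝ := fun n => Nat.casesOn n 0 (fun m => C * (ρ / r') ^ m) with hu
  have hGle : ∀ n x, x ∈ Metric.ball x₀ ρ → ‖G' n x‖ ≤ u n := by
    intro n x hx
    have hxρ : |x - x₀| ≤ ρ := le_of_lt (by simpa [Real.dist_eq] using Metric.mem_ball.1 hx)
    cases n with
    | zero => simp [hG', hu]
    | succ m =>
      rw [hG'succ m x, Real.norm_eq_abs, abs_mul, abs_pow]
      have h1 : |p.coeff m| * |x - x₀| ^ m ≤ |p.coeff m| * ρ ^ m :=
        mul_le_mul_of_nonneg_left (pow_le_pow_left₀ (abs_nonneg _) hxρ m) (abs_nonneg _)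
      refine h1.trans ?_
      have h2 : |p.coeff m| * ρ ^ m = (‖p m‖ * (r':ℝ) ^ m) * (ρ / r') ^ m := by
        rw [p.norm_apply_eq_norm_coef, Real.norm_eq_abs, div_pow]
        field_simp
      rw [h2]
      show (‖p m‖ * (r':ℝ) ^ m) * (ρ / r') ^ m ≤ C * (ρ / r') ^ m
      exact mul_le_mul_of_nonneg_right (hC m) (by positivity)
  have hsum_u : Summable u := by
    have hratio : 0 ≤ ρ / (r':ℝ) := by positivity
    have hratio1 : ρ / (r':ℝ) < 1 := (div_lt_one hr'0).2 hρr'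
    have h1 : Summable (fun m : ℕ => C * (ρ / (r':ℝ)) ^ m) :=
      (summable_geometric_of_lt_one hratio hratio1).mul_left C
    have h2 : (fun n : ℕ => u (n + 1)) = fun m : ℕ => C * (ρ / (r':ℝ)) ^ m := rfl
    exact (summable_nat_add_iff 1).1 (h2 ▸ h1)
  have hG0 : Summable (fun n => G n x₀) := by
    apply summable_of_ne_finset_zero (s := {0})
    intro n hn
    have hn' : n ≠ 0 := by simpa using hn
    simp [hG, zero_pow hn']
  have hkey : ∀ x ∈ Metric.ball x₀ ρ, HasDerivAt (fun z => ∑' n, G n z) (∑' n, G' n x) x :=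
    fun x hx => hasDerivAt_tsum_of_isPreconnected hsum_u Metric.isOpen_ball
      (convex_ball x₀ ρ).isPreconnected (fun n y _ => hGd n y) hGle
      (Metric.mem_ball_self hρpos) hG0 hx
  have hFsum : ∀ z ∈ Metric.ball x₀ ρ, (∑' n, G n z) = q.sum (z - x₀) := by
    intro z hz
    have hzρ : |z - x₀| < ρ := by simpa [Real.dist_eq] using Metric.mem_ball.1 hz
    have hmem : (z - x₀) ∈ Metric.eball (0:ℝ) q.radius := by
      rw [EMetric.mem_ball, edist_zero_right]
      refine lt_of_lt_of_le ?_ hqrad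
      have h0 : ‖z - x₀‖₊ < r' := by
        rw [← NNReal.coe_lt_coe, coe_nnnorm, Real.norm_eq_abs]
        exact hzρ.trans hρr'
      exact_mod_cast h0
    have hs := q.hasSum hmem
    have heqn : (fun n => q n fun _ => (z - x₀)) = fun n => G n z := by
      funext n
      rw [hq, FormalMultilinearSeries.ofScalars_apply_eq, smul_eq_mul]
    rw [heqn] at hs
    exact hs.tsum_eq
  have hG'sum : ∀ x ∈ Metric.ball x₀ ρ, HasSum (fun n => G' n x) (g x) := by
    intro x hx
    have hxρ : |x - x₀| < ρ := by simpa [Real.dist_eq] using Metric.mem_ball.1 hx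
    have h0 : ‖x - x₀‖₊ < r' := by
      rw [← NNReal.coe_lt_coe, coe_nnnorm, Real.norm_eq_abs]
      exact hxρ.trans hρr'
    have hxball : (x - x₀) ∈ Metric.eball (0:ℝ) R := by
      rw [EMetric.mem_ball, edist_zero_right]
      exact lt_trans (by exact_mod_cast h0) hr'R
    have h1 := hR.hasSum hxball
    rw [add_sub_cancel] at h1
    have h2 : (fun n => p n fun _ => (x - x₀)) = fun n => G' (n+1) x := by
      funext n
      rw [FormalMultilinearSeries.apply_eq_pow_smul_coeff, smul_eq_mul, hG'succ]
      ring
    rw [h2] at h1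
    have h3 := (hasSum_nat_add_iff (f := fun n => G' n x) 1).1 h1
    simpa [hG'] using h3
  have hkey2 : ∀ x ∈ Metric.ball x₀ ρ, HasDerivAt (fun z => q.sum (z - x₀)) (g x) x := by
    intro x hx
    have h := hkey x hx
    rw [(hG'sum x hx).tsum_eq] at h
    refine h.congr_of_eventuallyEq ?_
    refine Filter.eventuallyEq_of_mem (Metric.isOpen_ball.mem_nhds hx) fun z hz => ?_
    exact (hFsum z hz).symm
  have hdf : ∀ x ∈ Metric.ball x₀ ρ, HasDerivAt f (g x) x := fun x hx =>
    hball x (Metric.mem_ball.2 (lt_trans (Metric.mem_ball.1 hx) hρε))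
  have heq : Set.EqOn f (fun z => q.sum (z - x₀) + (f x₀ - q.sum (x₀ - x₀)))
      (Metric.ball x₀ ρ) := by
    apply Convex.eqOn_of_fderivWithin_eq (𝕜 := ℝ) (convex_ball x₀ ρ)
    · exact fun z hz => ((hdf z hz).differentiableAt).differentiableWithinAt
    · exact fun z hz => (((hkey2 z hz).add_const _).differentiableAt).differentiableWithinAt
    · exact Metric.isOpen_ball.uniqueDiffOn
    · intro z hz
      rw [fderivWithin_of_isOpen Metric.isOpen_ball hz,
        fderivWithin_of_isOpen Metric.isOpen_ball hz,
        (hdf z hz).hasFDerivAt.fderiv, ((hkey2 z hz).add_const _).hasFDerivAt.fderiv]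
    · exact Metric.mem_ball_self hρpos
    · ring
  have hA : AnalyticAt ℝ (fun z => q.sum (z - x₀) + (f x₀ - q.sum (x₀ - x₀))) x₀ :=
    hF0.add analyticAt_const
  exact hA.congr (Filter.eventuallyEq_of_mem (Metric.ball_mem_nhds x₀ hρpos)
    fun z hz => (heq hz).symm)

lemma hfun_analyticAt (H c t : ℝ) (ht : 0 < t) : AnalyticAt ℝ (hfun H c) t :=
  (hfun_contDiffAt H c t ht).analyticAt

lemma ffun_analyticAt (H c r a : ℝ) (hr : 0 < r) {t : ℝ} (ht : 0 < t) :
    AnalyticAt ℝ (ffun H c r a) t := by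
  apply analyticAt_of_hasDerivAt (hfun_analyticAt H c t ht)
  exact (isOpen_Ioi.eventually_mem ht).mono fun y hy => ffun_hasDerivAt H c r a hr hy

lemma hfun_hasDerivAt (H c : ℝ) {t : ℝ} (ht : 0 < t) :
    HasDerivAt (hfun H c)
      ((2 * H * t * Real.sqrt (t ^ 2 + (H * t ^ 2 - c) ^ 2)
        - (H * t ^ 2 - c) * ((2 * t + 2 * (H * t ^ 2 - c) * (2 * H * t))
            / (2 * Real.sqrt (t ^ 2 + (H * t ^ 2 - c) ^ 2))))
        / Real.sqrt (t ^ 2 + (H * t ^ 2 - c) ^ 2) ^ 2) t := by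
  have hS : (0:ℝ) < Real.sqrt (t ^ 2 + (H * t ^ 2 - c) ^ 2) :=
    Real.sqrt_pos.2 (Upos H c t ht)
  have hq : HasDerivAt (fun t : ℝ => H * t ^ 2 - c) (2 * H * t) t := by
    have := ((hasDerivAt_pow 2 t).const_mul H).sub_const c
    refine this.congr_deriv ?_
    push_cast
    ring
  have hu : HasDerivAt (fun t : ℝ => t ^ 2 + (H * t ^ 2 - c) ^ 2)
      (2 * t + 2 * (H * t ^ 2 - c) * (2 * H * t)) t := by
    have h1 : HasDerivAt (fun t : ℝ => t ^ 2) (2 * t) t := by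
      simpa using hasDerivAt_pow 2 t
    have h2 := hq.pow 2
    have := h1.add h2
    refine this.congr_deriv ?_
    push_cast
    ring
  have hsq : HasDerivAt (fun t : ℝ => Real.sqrt (t ^ 2 + (H * t ^ 2 - c) ^ 2))
      ((2 * t + 2 * (H * t ^ 2 - c) * (2 * H * t))
        / (2 * Real.sqrt (t ^ 2 + (H * t ^ 2 - c) ^ 2))) t :=
    hu.sqrt (Upos H c t ht).ne'
  exact hq.div hsq hS.ne'

/-- For all real `H` and `c`, the profile function `f(t; H, c)` is smooth on `(0, ∞)` and
satisfies the ODE `t f''(t) + (1 − f'(t)²) f'(t) = 2 H t (1 − f'(t)²)^{3/2}` for every `t > 0`;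
that is, the rotational spacelike surface `X(t, θ) = (t cos θ, t sin θ, f(t))` has constant
mean curvature `H` with respect to the future-directed orientation. -/
theorem ffun_cmc_ode (H c r a : ℝ) (hr : 0 < r) :
    ContDiffOn ℝ (⊤ : ℕ∞) (ffun H c r a) (Set.Ioi 0) ∧
    (∀ t : ℝ, 0 < t →
      t * deriv (deriv (ffun H c r a)) t
        + (1 - (deriv (ffun H c r a) t) ^ 2) * deriv (ffun H c r a) t
        = 2 * H * t * (1 - (deriv (ffun H c r a) t) ^ 2) ^ ((3 : ℝ) / 2)) := by
  have hderiv_eq : Set.EqOn (deriv (ffun H c r a)) (hfun H c) (Set.Ioi 0) :=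
    fun x hx => ffun_deriv_eq H c r a hr hx
  constructor
  · refine ((contDiffOn_omega_iff_analyticOn (f := ffun H c r a) isOpen_Ioi.uniqueDiffOn).2 ?_).of_le le_top
    exact fun x hx => (ffun_analyticAt H c r a hr hx).analyticWithinAt
  · intro t ht
    have hUpos : 0 < t ^ 2 + (H * t ^ 2 - c) ^ 2 := Upos H c t ht
    have hS : (0:ℝ) < Real.sqrt (t ^ 2 + (H * t ^ 2 - c) ^ 2) := Real.sqrt_pos.2 hUpos
    have h1 : deriv (ffun H c r a) t
        = (H * t ^ 2 - c) / Real.sqrt (t ^ 2 + (H * t ^ 2 - c) ^ 2) :=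
      ffun_deriv_eq H c r a hr ht
    have hEq : deriv (ffun H c r a) =ᶠ[nhds t] hfun H c :=
      Filter.eventuallyEq_of_mem (isOpen_Ioi.mem_nhds ht) hderiv_eq
    have h2 : deriv (deriv (ffun H c r a)) t
        = (2 * H * t * Real.sqrt (t ^ 2 + (H * t ^ 2 - c) ^ 2)
            - (H * t ^ 2 - c) * ((2 * t + 2 * (H * t ^ 2 - c) * (2 * H * t))
                / (2 * Real.sqrt (t ^ 2 + (H * t ^ 2 - c) ^ 2))))
            / Real.sqrt (t ^ 2 + (H * t ^ 2 - c) ^ 2) ^ 2 := by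
      rw [hEq.deriv_eq]
      exact (hfun_hasDerivAt H c ht).deriv
    rw [h1, h2]
    generalize hQg : H * t ^ 2 - c = Q
    have hUpos' : 0 < t ^ 2 + Q ^ 2 := by rw [← hQg]; exact Upos H c t ht
    have hS' : 0 < Real.sqrt (t ^ 2 + Q ^ 2) := Real.sqrt_pos.2 hUpos'
    have hS2 : Real.sqrt (t ^ 2 + Q ^ 2) ^ 2 = t ^ 2 + Q ^ 2 := Real.sq_sqrt hUpos'.le
    generalize hSg : Real.sqrt (t ^ 2 + Q ^ 2) = S at hS' hS2 ⊢
    have key : 1 - (Q / S) ^ 2 = (t / S) ^ 2 := by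
      field_simp
      rw [hS2]
      ring
    have hts : 0 < t / S := div_pos ht hS'
    have hrpow : ((t / S) ^ 2) ^ ((3:ℝ)/2) = (t / S) ^ 3 := by
      rw [← Real.rpow_natCast (t / S) 2, ← Real.rpow_mul hts.le,
        show ((2:ℕ):ℝ) * ((3:ℝ)/2) = ((3:ℕ):ℝ) by norm_num, Real.rpow_natCast]
    rw [key, hrpow]
    have hnum : 2 * H * t * S ^ 2 - Q * t - 2 * H * t * Q ^ 2 = t * (2 * H * t ^ 2 - Q) := by
      linear_combination 2 * H * t * hS2
    have hsimp : (2 * H * t * S - Q * ((2 * t + 2 * Q * (2 * H * t)) / (2 * S))) / S ^ 2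
        = t * (2 * H * t ^ 2 - Q) / S ^ 3 := by
      rw [← hnum]
      field_simp
      ring
    rw [hsimp]
    field_simp
    ring
end

section
/- (Theorem 1, (ii) ⇒ (i)) Let 0 < r < R and a, b ∈ ℝ satisfy |a − b|/(R − r) < 1. Then for every H ∈ ℝ there exists c ∈ ℝ such that the profile f(t; H, c) with f(r) = a satisfies f(R; H, c) = b, i.e., a + ∫_r^R h(s; H, c) ds = b. Hence there is a rotational spacelike surface of the form X(t, θ) = (t cos θ, t sin θ, f(t)), t ∈ [r, R], with constant mean curvature H spanning the circles Γ(r, a) and Γ(R, b). -/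
open Real MeasureTheory Filter Set
open Topology Interval

lemma hfun_meas (H c : ℝ) : Measurable (hfun H c) := by
  unfold hfun
  fun_prop

lemma hfun_abs_le (H c t : ℝ) : |hfun H c t| ≤ 1 := by
  unfold hfun
  set x := H * t ^ 2 - c with hx
  rcases eq_or_lt_of_le (Real.sqrt_nonneg (t ^ 2 + x ^ 2)) with h | h
  · rw [← h]; simp
  · rw [abs_div, abs_of_pos h, div_le_one h]
    calc |x| = Real.sqrt (x ^ 2) := (Real.sqrt_sq_eq_abs x).symm
    _ ≤ Real.sqrt (t ^ 2 + x ^ 2) := Real.sqrt_le_sqrt (by nlinarith [sq_nonneg t])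

lemma hfun_cont_c {t : ℝ} (ht : t ≠ 0) (H : ℝ) : Continuous fun c => hfun H c t := by
  unfold hfun
  apply Continuous.div
  · fun_prop
  · fun_prop
  · intro c
    have h : 0 < t ^ 2 + (H * t ^ 2 - c) ^ 2 := by positivity
    positivity

lemma g_tendsto {t : ℝ} (ht : 0 < t) :
    Tendsto (fun x : ℝ => x / Real.sqrt (t ^ 2 + x ^ 2)) atBot (𝓝 (-1)) := by
  have h0 : Tendsto (fun x : ℝ => t ^ 2 / x ^ 2 + 1) atBot (𝓝 1) := by
    have h1 : Tendsto (fun x : ℝ => x ^ 2) atBot atTop := by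
      have h' : Tendsto (fun x : ℝ => |x| ^ 2) atBot atTop :=
        (tendsto_pow_atTop two_ne_zero).comp tendsto_abs_atBot_atTop
      simpa [sq_abs] using h'
    have h2 : Tendsto (fun x : ℝ => t ^ 2 / x ^ 2) atBot (𝓝 0) :=
      Tendsto.div_atTop (tendsto_const_nhds : Tendsto (fun _ : ℝ => t ^ 2) atBot (𝓝 (t ^ 2))) h1
    have h3 : Tendsto (fun x : ℝ => t ^ 2 / x ^ 2 + 1) atBot (𝓝 (0 + 1)) :=
      h2.add tendsto_const_nhds
    simpa using h3
  have hs : Tendsto (fun x : ℝ => -1 / Real.sqrt (t ^ 2 / x ^ 2 + 1)) atBot (𝓝 (-1)) := by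
    have := (Real.continuous_sqrt.tendsto 1).comp h0
    have h2 : Tendsto (fun x : ℝ => Real.sqrt (t ^ 2 / x ^ 2 + 1)) atBot (𝓝 1) := by
      simpa [Function.comp_def] using this
    have := (tendsto_const_nhds (x := (-1 : ℝ))).div h2 one_ne_zero
    simpa [Pi.div_def] using this
  refine hs.congr' ?_
  filter_upwards [eventually_lt_atBot (0 : ℝ)] with x hx
  have hxne : x ≠ 0 := ne_of_lt hx
  have hsqrt : Real.sqrt (t ^ 2 + x ^ 2) = -x * Real.sqrt (t ^ 2 / x ^ 2 + 1) := by
    rw [← Real.sqrt_sq (by linarith : (0:ℝ) ≤ -x), ← Real.sqrt_mul (sq_nonneg _)]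
    congr 1
    first
      | (field_simp; ring)
      | field_simp
  have hspos : 0 < Real.sqrt (t ^ 2 / x ^ 2 + 1) := by
    apply Real.sqrt_pos.mpr; positivity
  rw [hsqrt]
  have hne : -x * Real.sqrt (t ^ 2 / x ^ 2 + 1) ≠ 0 :=
    ne_of_gt (mul_pos (neg_pos.mpr hx) hspos)
  rw [div_eq_div_iff (ne_of_gt hspos) hne]
  ring

lemma g_tendsto' {t : ℝ} (ht : 0 < t) :
    Tendsto (fun x : ℝ => x / Real.sqrt (t ^ 2 + x ^ 2)) atTop (𝓝 1) := by
  have h := ((g_tendsto ht).comp tendsto_neg_atTop_atBot).neg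
  rw [neg_neg] at h
  refine h.congr fun x => ?_
  simp [Function.comp, neg_div]

lemma hfun_tendsto_atTop {t : ℝ} (ht : 0 < t) (H : ℝ) :
    Tendsto (fun c => hfun H c t) atTop (𝓝 (-1)) := by
  have hx : Tendsto (fun c : ℝ => H * t ^ 2 - c) atTop atBot := by
    exact (tendsto_atBot_add_const_left atTop (H * t ^ 2) tendsto_neg_atTop_atBot).congr fun c => by ring
  exact (g_tendsto ht).comp hx

lemma hfun_tendsto_atBot {t : ℝ} (ht : 0 < t) (H : ℝ) :
    Tendsto (fun c => hfun H c t) atBot (𝓝 1) := by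
  have hx : Tendsto (fun c : ℝ => H * t ^ 2 - c) atBot atTop := by
    exact (tendsto_atTop_add_const_left atBot (H * t ^ 2) tendsto_neg_atBot_atTop).congr fun c => by ring
  exact (g_tendsto' ht).comp hx

/-- Theorem 1, (ii) ⇒ (i): if `0 < r < R` and `|a − b|/(R − r) < 1`, then for every `H ∈ ℝ`
there exists `c ∈ ℝ` such that the profile `f(t; H, c)` with `f(r) = a` satisfies
`f(R; H, c) = b`, i.e. `a + ∫_r^R h(s; H, c) ds = b`.  Hence there is a rotational spacelike
surface `X(t, θ) = (t cos θ, t sin θ, f(t))`, `t ∈ [r, R]`, with constant mean curvature `H`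
spanning the circles `Γ(r, a)` and `Γ(R, b)`. -/
theorem sufficient_condition (r R a b : ℝ) (hr : 0 < r) (hrR : r < R)
    (hab : |a - b| / (R - r) < 1) :
    ∀ H : ℝ, ∃ c : ℝ, ffun H c r a R = b := by
  intro H
  have hRr : 0 < R - r := by linarith
  have hy : |b - a| < R - r := by
    rw [abs_sub_comm]
    calc |a - b| = |a - b| / (R - r) * (R - r) := by field_simp
    _ < 1 * (R - r) := by exact mul_lt_mul_of_pos_right hab hRr
    _ = R - r := one_mul _
  set y := b - a with hy_def
  set F : ℝ → ℝ := fun c => ∫ s in r..R, hfun H c s with hF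
  -- a.e. positivity of t on the integration interval
  have hmem : ∀ s : ℝ, s ∈ Ι r R → 0 < s := by
    intro s hs
    rw [uIoc_of_le hrR.le] at hs
    linarith [hs.1]
  have hmeas : ∀ c : ℝ, AEStronglyMeasurable (hfun H c) (volume.restrict (Ι r R)) :=
    fun c => (hfun_meas H c).aestronglyMeasurable
  have hbound : ∀ c : ℝ, ∀ᵐ s, s ∈ Ι r R → ‖hfun H c s‖ ≤ (1 : ℝ) :=
    fun c => Eventually.of_forall fun s _ => by simpa using hfun_abs_le H c s
  have hbi : IntervalIntegrable (fun _ : ℝ => (1:ℝ)) volume r R := intervalIntegrable_const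
  -- Continuity of F
  have hFcont : Continuous F := by
    rw [continuous_iff_continuousAt]
    intro c₀
    apply intervalIntegral.tendsto_integral_filter_of_dominated_convergence
      (fun _ => (1 : ℝ)) (Eventually.of_forall hmeas) (Eventually.of_forall hbound) hbi
    exact Eventually.of_forall fun s hs => (hfun_cont_c (ne_of_gt (hmem s hs)) H).tendsto c₀
  -- Limits of F
  have hFtop : Tendsto F atTop (𝓝 (-(R - r))) := by
    have : Tendsto F atTop (𝓝 (∫ s in r..R, (-1 : ℝ))) := by
      apply intervalIntegral.tendsto_integral_filter_of_dominated_convergence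
        (fun _ => (1 : ℝ)) (Eventually.of_forall hmeas) (Eventually.of_forall hbound) hbi
      exact Eventually.of_forall fun s hs => hfun_tendsto_atTop (hmem s hs) H
    simpa using this
  have hFbot : Tendsto F atBot (𝓝 (R - r)) := by
    have : Tendsto F atBot (𝓝 (∫ s in r..R, (1 : ℝ))) := by
      apply intervalIntegral.tendsto_integral_filter_of_dominated_convergence
        (fun _ => (1 : ℝ)) (Eventually.of_forall hmeas) (Eventually.of_forall hbound) hbi
      exact Eventually.of_forall fun s hs => hfun_tendsto_atBot (hmem s hs) H
    simpa using this
  -- choose c₁ with F c₁ < y and c₂ with F c₂ > y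
  have hylt : y < R - r := (abs_lt.mp hy).2
  have hygt : -(R - r) < y := (abs_lt.mp hy).1
  obtain ⟨c₁, hc₁⟩ := (hFtop.eventually (eventually_lt_nhds hygt)).exists
  obtain ⟨c₂, hc₂⟩ := (hFbot.eventually (eventually_gt_nhds hylt)).exists
  have hyin : y ∈ uIcc (F c₁) (F c₂) := by
    rw [uIcc_of_le (by linarith)]
    exact ⟨hc₁.le, hc₂.le⟩
  obtain ⟨c, _, hc⟩ := intermediate_value_uIcc hFcont.continuousOn hyin
  refine ⟨c, ?_⟩
  have : F c = y := hc
  simp only [ffun]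
  rw [show (∫ s in r..R, hfun H c s) = F c from rfl, this, hy_def]
  ring
end

section
/- Fix H ∈ ℝ and 0 < r < R. Then lim_{c → +∞} ∫_r^R h(s; H, c) ds = −(R − r) and lim_{c → −∞} ∫_r^R h(s; H, c) ds = R − r. Equivalently, for the profile functions with f(r) = a, lim_{c → +∞} f(R; H, c) = a − (R − r) and lim_{c → −∞} f(R; H, c) = a + (R − r). -/
open Real MeasureTheory Filter Set

lemma gtop (b : ℝ) (hb : 0 ≤ b) :
    Tendsto (fun x : ℝ => x / Real.sqrt (b + x ^ 2)) atTop (nhds 1) := by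
  have h0 : Tendsto (fun x : ℝ => b / x ^ 2) atTop (nhds 0) := by
    have := (tendsto_pow_atTop (two_ne_zero)).inv_tendsto_atTop (α := ℝ)
    simpa [div_eq_mul_inv] using (this.const_mul b)
  have h1 : Tendsto (fun x : ℝ => 1 / Real.sqrt (b / x ^ 2 + 1)) atTop (nhds 1) := by
    have : Tendsto (fun x : ℝ => b / x ^ 2 + 1) atTop (nhds 1) := by
      simpa using h0.add tendsto_const_nhds
    have h2 : Tendsto (fun x : ℝ => Real.sqrt (b / x ^ 2 + 1)) atTop (nhds 1) := by
      simpa [Function.comp_def] using (Real.continuous_sqrt.tendsto 1).comp this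
    have h3 : Tendsto (fun x : ℝ => 1 / Real.sqrt (b / x ^ 2 + 1)) atTop (nhds (1 / 1)) :=
      (tendsto_const_nhds (x := (1:ℝ))).div h2 one_ne_zero
    simpa using h3
  refine h1.congr' ?_
  filter_upwards [eventually_gt_atTop (0:ℝ)] with x hx
  have hx2 : (0:ℝ) < x ^ 2 := by positivity
  have key : Real.sqrt (b + x ^ 2) = x * Real.sqrt (b / x ^ 2 + 1) := by
    rw [show b + x ^ 2 = x ^ 2 * (b / x ^ 2 + 1) by field_simp, Real.sqrt_mul (by positivity),
      Real.sqrt_sq hx.le]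
  rw [key]
  have hs : 0 < Real.sqrt (b / x ^ 2 + 1) := Real.sqrt_pos.2 (by positivity)
  field_simp

lemma gbot (b : ℝ) (hb : 0 ≤ b) :
    Tendsto (fun x : ℝ => x / Real.sqrt (b + x ^ 2)) atBot (nhds (-1)) := by
  have h := ((gtop b hb).comp tendsto_neg_atBot_atTop).neg
  simp only [Function.comp, neg_sq, neg_div, neg_neg] at h
  exact h

lemma hbound (H c s : ℝ) : |hfun H c s| ≤ 1 := by
  unfold hfun
  rcases eq_or_ne (H * s ^ 2 - c) 0 with h | h
  · simp [h]
  · have h1 : |H * s ^ 2 - c| ≤ Real.sqrt (s ^ 2 + (H * s ^ 2 - c) ^ 2) := by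
      rw [← Real.sqrt_sq_eq_abs]
      exact Real.sqrt_le_sqrt (by nlinarith [sq_nonneg s])
    have h2 : (0:ℝ) < Real.sqrt (s ^ 2 + (H * s ^ 2 - c) ^ 2) :=
      lt_of_lt_of_le (abs_pos.2 h) h1
    rw [abs_div, div_le_one (by simpa [abs_of_pos h2] using h2)]
    simpa [abs_of_pos h2] using h1

lemma hmeas (H c : ℝ) : Measurable (fun s => hfun H c s) := by
  unfold hfun; fun_prop

lemma int_tendsto_top (H r R : ℝ) (hr : 0 < r) (hrR : r < R) :
    Tendsto (fun c : ℝ => ∫ s in r..R, hfun H c s) atTop (nhds (-(R - r))) := by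
  have hRr : (0:ℝ) ≤ R - r := by linarith
  have key : Tendsto (fun c : ℝ => ∫ s in Ioc r R, hfun H c s) atTop
      (nhds (∫ _ in Ioc r R, (-1 : ℝ))) := by
    apply tendsto_integral_filter_of_dominated_convergence (fun _ => (1:ℝ))
    · exact Eventually.of_forall fun c => (hmeas H c).aestronglyMeasurable
    · exact Eventually.of_forall fun c => ae_of_all _ fun s => hbound H c s
    · exact integrable_const _
    · refine ae_restrict_of_forall_mem measurableSet_Ioc fun s hs => ?_
      have hs0 : 0 < s := lt_trans hr hs.1
      have h1 : Tendsto (fun c : ℝ => H * s ^ 2 - c) atTop atBot :=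
        by simpa [sub_eq_add_neg] using
          tendsto_atBot_add_const_left atTop (H * s ^ 2) tendsto_neg_atTop_atBot
      have := (gbot (s ^ 2) (sq_nonneg s)).comp h1
      simpa [hfun, Function.comp, Function.comp_def, add_comm] using this
  have : (∫ _ in Ioc r R, (-1 : ℝ)) = -(R - r) := by
    simp [Real.volume_Ioc, ENNReal.toReal_ofReal hRr]
    rw [max_eq_left hRr]; ring
  rw [this] at key
  refine key.congr fun c => ?_
  rw [intervalIntegral.integral_of_le hrR.le]

lemma int_tendsto_bot (H r R : ℝ) (hr : 0 < r) (hrR : r < R) :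
    Tendsto (fun c : ℝ => ∫ s in r..R, hfun H c s) atBot (nhds (R - r)) := by
  have hRr : (0:ℝ) ≤ R - r := by linarith
  have key : Tendsto (fun c : ℝ => ∫ s in Ioc r R, hfun H c s) atBot
      (nhds (∫ _ in Ioc r R, (1 : ℝ))) := by
    apply tendsto_integral_filter_of_dominated_convergence (fun _ => (1:ℝ))
    · exact Eventually.of_forall fun c => (hmeas H c).aestronglyMeasurable
    · exact Eventually.of_forall fun c => ae_of_all _ fun s => hbound H c s
    · exact integrable_const _
    · refine ae_restrict_of_forall_mem measurableSet_Ioc fun s hs => ?_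
      have hs0 : 0 < s := lt_trans hr hs.1
      have h1 : Tendsto (fun c : ℝ => H * s ^ 2 - c) atBot atTop :=
        by simpa [sub_eq_add_neg] using
          tendsto_atTop_add_const_left atBot (H * s ^ 2) tendsto_neg_atBot_atTop
      have := (gtop (s ^ 2) (sq_nonneg s)).comp h1
      simpa [hfun, Function.comp, Function.comp_def, add_comm] using this
  have : (∫ _ in Ioc r R, (1 : ℝ)) = R - r := by
    simp [Real.volume_Ioc, ENNReal.toReal_ofReal hRr]
    exact hrR.le
  rw [this] at key
  refine key.congr fun c => ?_
  rw [intervalIntegral.integral_of_le hrR.le]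

/-- Fix `H ∈ ℝ` and `0 < r < R`.  Then `lim_{c → +∞} ∫_r^R h(s; H, c) ds = −(R − r)` and
`lim_{c → −∞} ∫_r^R h(s; H, c) ds = R − r`.  Equivalently, for the profile functions with
`f(r) = a`, `lim_{c → +∞} f(R; H, c) = a − (R − r)` and
`lim_{c → −∞} f(R; H, c) = a + (R − r)`. -/
theorem limits_in_c (H r R : ℝ) (hr : 0 < r) (hrR : r < R) :
    Tendsto (fun c : ℝ => ∫ s in r..R, hfun H c s) atTop (nhds (-(R - r))) ∧
    Tendsto (fun c : ℝ => ∫ s in r..R, hfun H c s) atBot (nhds (R - r)) ∧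
    (∀ a : ℝ,
      Tendsto (fun c : ℝ => ffun H c r a R) atTop (nhds (a - (R - r))) ∧
      Tendsto (fun c : ℝ => ffun H c r a R) atBot (nhds (a + (R - r)))) := by
  exact ⟨int_tendsto_top H r R hr hrR, int_tendsto_bot H r R hr hrR, fun a =>
    ⟨by simpa [ffun, sub_eq_add_neg] using
        (tendsto_const_nhds (x := a)).add (int_tendsto_top H r R hr hrR),
     by simpa [ffun] using (tendsto_const_nhds (x := a)).add (int_tendsto_bot H r R hr hrR)⟩⟩
end

section
/- Let H ∈ ℝ and c ≠ 0. Then lim_{t → 0⁺} h(t; H, c) = −c/|c|; in particular lim_{t → 0⁺} f'(t; H, c)² = 1, so the rotational surface has a conical-type singularity at the axis: if c < 0 the surface is tangent to the upper light cone at (0, 0, f(0)), and if c > 0 it is tangent to the lower light cone at (0, 0, f(0)). -/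
open Real MeasureTheory Filter Set

/-! The formula for `h` makes sense at `t = 0`, where the denominator is `√(c²) = |c| ≠ 0`, so `h`
is continuous there and its limit from the right is just `h(0) = −c/|c| = ∓1`. -/

open Topology

theorem hfun_zero (H c : ℝ) : hfun H c 0 = -c / |c| := by
  simp [hfun, Real.sqrt_sq_eq_abs, neg_div]

theorem continuousAt_hfun_zero (H : ℝ) {c : ℝ} (hc : c ≠ 0) : ContinuousAt (hfun H c) 0 := by
  refine ContinuousAt.div (by fun_prop) (by fun_prop) ?_
  simpa [Real.sqrt_sq_eq_abs] using hc

theorem tendsto_hfun_nhdsGT_zero (H : ℝ) {c : ℝ} (hc : c ≠ 0) :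
    Tendsto (hfun H c) (𝓝[>] 0) (𝓝 (-c / |c|)) :=
  hfun_zero H c ▸ (continuousAt_hfun_zero H hc).continuousWithinAt.tendsto

section LinearOrderedField

variable {K : Type*} [Field K] [LinearOrder K] [IsStrictOrderedRing K] {c : K}

theorem neg_div_abs_sq (hc : c ≠ 0) : (-c / |c|) ^ 2 = 1 := by
  rw [div_pow, neg_sq, sq_abs, div_self (pow_ne_zero 2 hc)]

theorem neg_div_abs_of_neg (hc : c < 0) : -c / |c| = 1 := by
  rw [abs_of_neg hc, div_self (neg_ne_zero.mpr hc.ne)]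

theorem neg_div_abs_of_pos (hc : 0 < c) : -c / |c| = -1 := by
  rw [abs_of_pos hc, neg_div, div_self hc.ne']

end LinearOrderedField

/-- Let `H ∈ ℝ` and `c ≠ 0`.  Then `lim_{t → 0⁺} h(t; H, c) = −c/|c|`; in particular
`lim_{t → 0⁺} f'(t; H, c)² = 1`, so the rotational surface has a conical-type singularity at
the axis: if `c < 0` the surface is tangent to the upper light cone (limit slope `1`) and if
`c > 0` it is tangent to the lower light cone (limit slope `−1`). -/
theorem conical_singularity (H c : ℝ) (hc : c ≠ 0) :
    Tendsto (fun t => hfun H c t) (nhdsWithin 0 (Set.Ioi 0)) (nhds (-c / |c|)) ∧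
    Tendsto (fun t => (hfun H c t) ^ 2) (nhdsWithin 0 (Set.Ioi 0)) (nhds 1) ∧
    (c < 0 → Tendsto (fun t => hfun H c t) (nhdsWithin 0 (Set.Ioi 0)) (nhds 1)) ∧
    (0 < c → Tendsto (fun t => hfun H c t) (nhdsWithin 0 (Set.Ioi 0)) (nhds (-1))) := by
  have hlim := tendsto_hfun_nhdsGT_zero H hc
  refine ⟨hlim, ?_, fun hneg => ?_, fun hpos => ?_⟩
  · simpa only [neg_div_abs_sq hc] using hlim.pow 2
  · rwa [neg_div_abs_of_neg hneg] at hlim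
  · rwa [neg_div_abs_of_pos hpos] at hlim
end

section
/- Let c ∈ ℝ. For H = 0, the profile function satisfies lim_{t → ∞} f(t; 0, c)/t = 0; that is, rotational maximal surfaces are not asymptotic to a light cone at infinity. -/
open Real MeasureTheory Filter Set

/-- For `H = 0` the profile function satisfies `lim_{t → ∞} f(t; 0, c)/t = 0`; that is,
rotational maximal surfaces are not asymptotic to a light cone at infinity. -/
theorem maximal_not_asymptotic_lightcone (c r a : ℝ) (hr : 0 < r) :
    Tendsto (fun t => ffun 0 c r a t / t) atTop (nhds 0) := by

  -- bound |ffun| ≤ |a| + |c| * (log t - log r) for t ≥ r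
  have hbound : ∀ t : ℝ, r ≤ t → |ffun 0 c r a t| ≤ |a| + |c| * (log t - log r) := by
    intro t ht
    have h0 : (0:ℝ) ∉ Set.uIcc r t := by
      rw [Set.uIcc_of_le ht]
      rintro ⟨h1, h2⟩; linarith
    have hInt : IntervalIntegrable (fun s => |c| * (1 / s)) volume r t := by
      apply ContinuousOn.intervalIntegrable
      apply ContinuousOn.mul continuousOn_const
      apply ContinuousOn.div continuousOn_const continuousOn_id
      intro x hx
      rw [Set.uIcc_of_le ht] at hx
      exact ne_of_gt (lt_of_lt_of_le hr hx.1)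
    have key : ‖∫ s in r..t, hfun 0 c s‖ ≤ |∫ s in r..t, |c| * (1 / s)| := by
      apply intervalIntegral.norm_integral_le_abs_of_norm_le _ hInt
      filter_upwards [ae_restrict_mem measurableSet_Ioc] with s hs
      rw [Set.uIoc_of_le ht] at hs
      have hs0 : 0 < s := lt_of_lt_of_le hr (le_of_lt hs.1)
      have hden : Real.sqrt (s ^ 2 + (0 * s ^ 2 - c) ^ 2) ≥ s := by
        calc Real.sqrt (s ^ 2 + (0 * s ^ 2 - c) ^ 2) ≥ Real.sqrt (s ^ 2) := by
              apply Real.sqrt_le_sqrt; nlinarith [sq_nonneg (0 * s ^ 2 - c)]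
          _ = s := by rw [Real.sqrt_sq hs0.le]
      simp only [hfun, Real.norm_eq_abs]
      rw [abs_div]
      have : |0 * s ^ 2 - c| = |c| := by simp
      rw [this]
      rw [abs_of_nonneg (Real.sqrt_nonneg _), mul_one_div]
      exact div_le_div_of_nonneg_left (abs_nonneg c) hs0 hden
    have hlog : ∫ s in r..t, |c| * (1 / s) = |c| * (log t - log r) := by
      rw [intervalIntegral.integral_const_mul, integral_one_div h0,
        Real.log_div (ne_of_gt (lt_of_lt_of_le hr ht)) (ne_of_gt hr)]
    rw [hlog] at key
    have hnn : 0 ≤ |c| * (log t - log r) :=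
      mul_nonneg (abs_nonneg c) (sub_nonneg.mpr (Real.log_le_log hr ht))
    rw [abs_of_nonneg hnn, Real.norm_eq_abs] at key
    calc |ffun 0 c r a t| ≤ |a| + |∫ s in r..t, hfun 0 c s| := abs_add_le _ _
      _ ≤ |a| + |c| * (log t - log r) := by linarith
  -- squeeze
  apply squeeze_zero_norm' (a := fun t => (|a| + |c| * (log t - log r)) / t)
  · filter_upwards [eventually_ge_atTop r, eventually_gt_atTop 0] with t ht ht0
    rw [Real.norm_eq_abs, abs_div, abs_of_pos ht0]
    gcongr
    exact hbound t ht
  · have h1 : Tendsto (fun t : ℝ => (|a| - |c| * log r) * (1 / t)) atTop (nhds 0) := by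
      simpa using (tendsto_const_nhds.mul tendsto_inv_atTop_zero (f := fun t:ℝ => (|a| - |c| * log r)))
    have h2 : Tendsto (fun t : ℝ => |c| * (log t / t)) atTop (nhds 0) := by
      have := Real.isLittleO_log_id_atTop.tendsto_div_nhds_zero
      simpa using tendsto_const_nhds.mul this
    have := h1.add h2
    simp only [add_zero] at this
    apply this.congr'
    filter_upwards [eventually_gt_atTop 0] with t ht0
    field_simp
    ring
end

section
/- Let H ≠ 0, c = 0, r > 0 and a ∈ ℝ. Then the profile function has the explicit form f(t; H, 0) = a + (√(1 + H² t²) − √(1 + H² r²))/H for all t > 0. Moreover, setting p = (0, 0, d) with d = a − √(1 + H² r²)/H, every point x = (t cos θ, t sin θ, f(t)) of the rotational surface satisfies x₁² + x₂² − (x₃ − d)² = −1/H²; that is, the surface is a subset of the hyperbolic plane {x ∈ L³ : ⟨x − p, x − p⟩ = −1/H²} and is regular at t = 0. -/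
open Real MeasureTheory Filter Set

/-- Let `H ≠ 0`, `c = 0`, `r > 0` and `a ∈ ℝ`.  Then the profile function has the explicit
form `f(t; H, 0) = a + (√(1 + H² t²) − √(1 + H² r²))/H` for all `t > 0`.  Moreover, setting
`d = a − √(1 + H² r²)/H`, every point `x = (t cos θ, t sin θ, f(t))` of the rotational surface
satisfies `x₁² + x₂² − (x₃ − d)² = −1/H²`: the surface is a subset of the hyperbolic plane
`{x ∈ L³ : ⟨x − p, x − p⟩ = −1/H²}` with `p = (0, 0, d)` and is regular at `t = 0`. -/
theorem hyperbolic_plane (H r a : ℝ) (hH : H ≠ 0) (hr : 0 < r) :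
    (∀ t : ℝ, 0 < t →
      ffun H 0 r a t
        = a + (Real.sqrt (1 + H ^ 2 * t ^ 2) - Real.sqrt (1 + H ^ 2 * r ^ 2)) / H) ∧
    (∀ t θ : ℝ, 0 < t →
      (t * Real.cos θ) ^ 2 + (t * Real.sin θ) ^ 2
        - (ffun H 0 r a t - (a - Real.sqrt (1 + H ^ 2 * r ^ 2) / H)) ^ 2
        = -(1 / H ^ 2)) := by
  have key : ∀ t : ℝ, 0 < t →
      ffun H 0 r a t
        = a + (Real.sqrt (1 + H ^ 2 * t ^ 2) - Real.sqrt (1 + H ^ 2 * r ^ 2)) / H := by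
    intro t ht
    have hmin : 0 < min r t := lt_min hr ht
    have hderiv : ∀ s ∈ Set.uIcc r t,
        HasDerivAt (fun u => Real.sqrt (1 + H ^ 2 * u ^ 2) / H) (hfun H 0 s) s := by
      intro s hs
      have hs0 : 0 < s := lt_of_lt_of_le hmin hs.1
      have hpos : (0:ℝ) < 1 + H ^ 2 * s ^ 2 := by positivity
      have h1 : HasDerivAt (fun u : ℝ => 1 + H ^ 2 * u ^ 2) (H ^ 2 * (2 * s)) s := by
        have := ((hasDerivAt_pow 2 s).const_mul (H ^ 2)).const_add 1
        simpa using this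
      have h2 := (h1.sqrt hpos.ne').div_const H
      refine h2.congr_deriv ?_
      have hsq : Real.sqrt (s ^ 2 + (H * s ^ 2 - 0) ^ 2)
          = s * Real.sqrt (1 + H ^ 2 * s ^ 2) := by
        rw [show s ^ 2 + (H * s ^ 2 - 0) ^ 2 = s ^ 2 * (1 + H ^ 2 * s ^ 2) by ring,
          Real.sqrt_mul (sq_nonneg s), Real.sqrt_sq hs0.le]
      have hsqpos : 0 < Real.sqrt (1 + H ^ 2 * s ^ 2) := Real.sqrt_pos.mpr hpos
      unfold hfun
      rw [hsq]
      field_simp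
      ring
    have hint : IntervalIntegrable (hfun H 0) MeasureTheory.volume r t := by
      apply ContinuousOn.intervalIntegrable
      intro s hs
      have hs0 : 0 < s := lt_of_lt_of_le hmin hs.1
      apply ContinuousAt.continuousWithinAt
      have hd : (0:ℝ) < s ^ 2 + (H * s ^ 2 - 0) ^ 2 := by positivity
      have hcd : ContinuousAt (fun u : ℝ => Real.sqrt (u ^ 2 + (H * u ^ 2 - 0) ^ 2)) s :=
        (Real.continuous_sqrt.comp (by continuity)).continuousAt
      exact ContinuousAt.div (by fun_prop) hcd (ne_of_gt (Real.sqrt_pos.mpr hd))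
    unfold ffun
    rw [intervalIntegral.integral_eq_sub_of_hasDerivAt hderiv hint]
    ring
  refine ⟨key, ?_⟩
  intro t θ ht
  rw [key t ht]
  have hA : Real.sqrt (1 + H ^ 2 * t ^ 2) ^ 2 = 1 + H ^ 2 * t ^ 2 :=
    Real.sq_sqrt (by positivity)
  have hcs : Real.cos θ ^ 2 + Real.sin θ ^ 2 = 1 := by
    rw [add_comm]; exact Real.sin_sq_add_cos_sq θ
  field_simp
  nlinarith [hA, hcs, sq_nonneg H, sq_nonneg t,
    show Real.sqrt (1 + t ^ 2 * H ^ 2) ^ 2 = 1 + t ^ 2 * H ^ 2 from Real.sq_sqrt (by positivity),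
    show t ^ 2 * (Real.cos θ ^ 2 + Real.sin θ ^ 2) * H ^ 2 = t ^ 2 * H ^ 2 by rw [hcs]; ring]
end

section
/- (Proposition on hyperbolic caps) Let 0 < r < R and a, b ∈ ℝ with 0 < b − a < R − r, and set H₀ = 2(b − a)/√(((R − r)² − (b − a)²)·((R + r)² − (b − a)²)). Then a + (√(1 + H₀² R²) − √(1 + H₀² r²))/H₀ = b; that is, there is a hyperbolic cap (the profile f(t; H₀, 0) with f(r) = a) of constant mean curvature H₀ spanning the circles Γ(r, a) and Γ(R, b). -/
open Real MeasureTheory Filter Set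

/-- Proposition on hyperbolic caps: let `0 < r < R` and `0 < b − a < R − r`, and set
`H₀ = 2(b − a)/√(((R − r)² − (b − a)²)·((R + r)² − (b − a)²))`.  Then
`a + (√(1 + H₀² R²) − √(1 + H₀² r²))/H₀ = b`; that is, the hyperbolic cap given by the
profile `f(t; H₀, 0)` with `f(r) = a` has constant mean curvature `H₀` and spans the circles
`Γ(r, a)` and `Γ(R, b)`. -/
theorem hyperbolic_cap (r R a b H₀ : ℝ) (hr : 0 < r) (hrR : r < R)
    (h1 : 0 < b - a) (h2 : b - a < R - r)
    (hH₀ : H₀ = 2 * (b - a) /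
      Real.sqrt (((R - r) ^ 2 - (b - a) ^ 2) * ((R + r) ^ 2 - (b - a) ^ 2))) :
    a + (Real.sqrt (1 + H₀ ^ 2 * R ^ 2) - Real.sqrt (1 + H₀ ^ 2 * r ^ 2)) / H₀ = b ∧
    ffun H₀ 0 r a R = b := by
  set d := b - a with hd
  have hP1 : 0 < (R - r) ^ 2 - d ^ 2 := by nlinarith
  have hP2 : 0 < (R + r) ^ 2 - d ^ 2 := by nlinarith
  set P := ((R - r) ^ 2 - d ^ 2) * ((R + r) ^ 2 - d ^ 2) with hPdef
  have hP : 0 < P := mul_pos hP1 hP2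
  have hsP : 0 < Real.sqrt P := Real.sqrt_pos.mpr hP
  have hsq : Real.sqrt P ^ 2 = P := Real.sq_sqrt hP.le
  have hH : 0 < H₀ := by rw [hH₀]; positivity
  have hH2 : H₀ ^ 2 = 4 * d ^ 2 / P := by
    rw [hH₀, div_pow, Real.sq_sqrt hP.le]; ring
  have hAR : 0 < R ^ 2 - r ^ 2 + d ^ 2 := by nlinarith
  have hAr : 0 < R ^ 2 - r ^ 2 - d ^ 2 := by nlinarith
  have eR : Real.sqrt (1 + H₀ ^ 2 * R ^ 2) = (R ^ 2 - r ^ 2 + d ^ 2) / Real.sqrt P := by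
    have : 1 + H₀ ^ 2 * R ^ 2 = ((R ^ 2 - r ^ 2 + d ^ 2) / Real.sqrt P) ^ 2 := by
      rw [hH2, div_pow, hsq]; field_simp; ring
    rw [this, Real.sqrt_sq (by positivity)]
  have er : Real.sqrt (1 + H₀ ^ 2 * r ^ 2) = (R ^ 2 - r ^ 2 - d ^ 2) / Real.sqrt P := by
    have : 1 + H₀ ^ 2 * r ^ 2 = ((R ^ 2 - r ^ 2 - d ^ 2) / Real.sqrt P) ^ 2 := by
      rw [hH2, div_pow, hsq]; field_simp; ring
    rw [this, Real.sqrt_sq (by positivity)]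
  have key : a + (Real.sqrt (1 + H₀ ^ 2 * R ^ 2) - Real.sqrt (1 + H₀ ^ 2 * r ^ 2)) / H₀ = b := by
    rw [eR, er, hH₀]
    have h2d : (2 : ℝ) * d ≠ 0 := by positivity
    field_simp
    nlinarith [hd, sq_nonneg d]
  refine ⟨key, ?_⟩
  -- second part
  have hderiv : ∀ t ∈ Set.uIcc r R, HasDerivAt
      (fun t => Real.sqrt (1 + H₀ ^ 2 * t ^ 2) / H₀) (hfun H₀ 0 t) t := by
    intro t ht
    have htpos : 0 < t := by
      rcases Set.mem_uIcc.mp ht with h | h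
      · linarith [h.1]
      · linarith [h.1]
    have hu : 0 < 1 + H₀ ^ 2 * t ^ 2 := by positivity
    have h1' : HasDerivAt (fun t : ℝ => 1 + H₀ ^ 2 * t ^ 2) (H₀ ^ 2 * (2 * t)) t := by
      have := ((hasDerivAt_pow 2 t).const_mul (H₀ ^ 2)).const_add 1
      simpa using this
    have h2' := (Real.hasDerivAt_sqrt hu.ne').comp t h1'
    have h3' := h2'.div_const H₀
    refine h3'.congr_deriv ?_
    have hsu : 0 < Real.sqrt (1 + H₀ ^ 2 * t ^ 2) := Real.sqrt_pos.mpr hu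
    have hspl : Real.sqrt (t ^ 2 + (H₀ * t ^ 2 - 0) ^ 2)
        = t * Real.sqrt (1 + H₀ ^ 2 * t ^ 2) := by
      rw [show t ^ 2 + (H₀ * t ^ 2 - 0) ^ 2 = t ^ 2 * (1 + H₀ ^ 2 * t ^ 2) by ring,
        Real.sqrt_mul (by positivity), Real.sqrt_sq htpos.le]
    rw [hfun, hspl]
    have hs2 : Real.sqrt (1 + H₀ ^ 2 * t ^ 2) ^ 2 = 1 + H₀ ^ 2 * t ^ 2 :=
      Real.sq_sqrt hu.le
    field_simp
    ring
  have hcont : ContinuousOn (fun t => hfun H₀ 0 t) (Set.uIcc r R) := by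
    apply ContinuousOn.div
    · fun_prop
    · apply Continuous.continuousOn; fun_prop
    · intro t ht
      have htpos : 0 < t := by
        rcases Set.mem_uIcc.mp ht with h | h
        · linarith [h.1]
        · linarith [h.1]
      have : 0 < t ^ 2 + (H₀ * t ^ 2 - 0) ^ 2 := by positivity
      exact (Real.sqrt_pos.mpr this).ne'
  have hint : IntervalIntegrable (fun t => hfun H₀ 0 t) MeasureTheory.volume r R :=
    hcont.intervalIntegrable
  have := intervalIntegral.integral_eq_sub_of_hasDerivAt hderiv hint
  rw [ffun]
  rw [show (fun s => hfun H₀ 0 s) = hfun H₀ 0 from rfl] at this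
  rw [this]
  rw [div_sub_div_same] at *
  linarith [key]
end

section
/- Let 0 < r < R and a, b ∈ ℝ with 0 < b − a < R − r, and set H₀ = 2(b − a)/√(((R − r)² − (b − a)²)·((R + r)² − (b − a)²)). Then for every H with 0 < H < H₀ there exists a unique c < 0 such that the profile f(t; H, c) with f(r) = a satisfies f(R; H, c) = b; that is, there is a unique rotational spacelike surface with constant mean curvature H, corresponding to a negative first-integral constant c, spanning Γ(r, a) and Γ(R, b). -/
open Real MeasureTheory Filter Set

lemma psi_mono {k x y : ℝ} (hk : 0 < k) (hxy : x < y) :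
    x / Real.sqrt (k + x ^ 2) < y / Real.sqrt (k + y ^ 2) := by
  have hx0 : 0 < k + x ^ 2 := by positivity
  have hy0 : 0 < k + y ^ 2 := by positivity
  have hsx : 0 < Real.sqrt (k + x ^ 2) := Real.sqrt_pos.2 hx0
  have hsy : 0 < Real.sqrt (k + y ^ 2) := Real.sqrt_pos.2 hy0
  have hsx2 : Real.sqrt (k + x ^ 2) ^ 2 = k + x ^ 2 := Real.sq_sqrt hx0.le
  have hsy2 : Real.sqrt (k + y ^ 2) ^ 2 = k + y ^ 2 := Real.sq_sqrt hy0.le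
  rw [div_lt_div_iff₀ hsx hsy]
  rcases le_or_gt 0 x with h0x | h0x
  · have hy : 0 < y := lt_of_le_of_lt h0x hxy
    refine lt_of_pow_lt_pow_left₀ 2 (by positivity) ?_
    rw [mul_pow, mul_pow, hsx2, hsy2]
    have hxy2 : x ^ 2 < y ^ 2 := by nlinarith
    nlinarith [mul_lt_mul_of_pos_left hxy2 hk]
  · rcases lt_or_ge 0 y with h0y | h0y
    · have h1 : x * Real.sqrt (k + y ^ 2) < 0 := mul_neg_of_neg_of_pos h0x hsy
      have h2 : 0 < y * Real.sqrt (k + x ^ 2) := mul_pos h0y hsx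
      linarith
    · have h1 : (-y) * Real.sqrt (k + x ^ 2) < (-x) * Real.sqrt (k + y ^ 2) := by
        refine lt_of_pow_lt_pow_left₀ 2 (mul_nonneg (by linarith) hsy.le) ?_
        rw [mul_pow, mul_pow, hsx2, hsy2]
        have hxy2 : y ^ 2 < x ^ 2 := by nlinarith
        nlinarith [mul_lt_mul_of_pos_left hxy2 hk]
      linarith [h1]

lemma psi_lower {k x : ℝ} (hk : 0 < k) (hx : 0 < x) :
    1 - k / (2 * x ^ 2) ≤ x / Real.sqrt (k + x ^ 2) := by
  have hs : 0 < Real.sqrt (k + x ^ 2) := Real.sqrt_pos.2 (by positivity)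
  rcases le_or_gt 1 (k / (2 * x ^ 2)) with h | h
  · have : 0 < x / Real.sqrt (k + x ^ 2) := by positivity
    linarith
  · rw [le_div_iff₀ hs]
    have hx2 : 0 < x ^ 2 := by positivity
    have hu0 : 0 ≤ k / (2 * x ^ 2) := by positivity
    refine le_of_pow_le_pow_left₀ (n := 2) (by norm_num) hx.le ?_
    rw [mul_pow, Real.sq_sqrt (by positivity)]
    have hk' : k = (k / (2 * x ^ 2)) * (2 * x ^ 2) := by field_simp
    set u := k / (2 * x ^ 2) with hud
    nlinarith [mul_nonneg (mul_nonneg hx2.le (sq_nonneg u)) (by linarith : (0:ℝ) ≤ 3 - 2 * u)]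


lemma hfun_contOn_s13 (H c r R : ℝ) (hr : 0 < r) : ContinuousOn (hfun H c) (Icc r R) := by
  apply ContinuousOn.div (by fun_prop) (Real.continuous_sqrt.comp_continuousOn (by fun_prop))
  intro s hs
  have hs0 : 0 < s := hr.trans_le hs.1
  have : 0 < s ^ 2 + (H * s ^ 2 - c) ^ 2 := by nlinarith [sq_nonneg (H * s ^ 2 - c)]
  exact (Real.sqrt_pos.2 this).ne'

lemma hfun_strict (H : ℝ) {c c' s : ℝ} (hs : 0 < s) (h : c < c') :
    hfun H c' s < hfun H c s := by
  have hk : 0 < s ^ 2 := by positivity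
  exact psi_mono hk (by linarith : H * s ^ 2 - c' < H * s ^ 2 - c)

lemma gInt_anti (H r R : ℝ) (hr : 0 < r) (hrR : r < R) {c c' : ℝ} (h : c < c') :
    (∫ s in r..R, hfun H c' s) < ∫ s in r..R, hfun H c s := by
  apply intervalIntegral.integral_lt_integral_of_continuousOn_of_le_of_exists_lt hrR
    (hfun_contOn_s13 H c' r R hr) (hfun_contOn_s13 H c r R hr)
  · intro s hs
    exact (hfun_strict H (hr.trans hs.1) h).le
  · exact ⟨r, left_mem_Icc.2 hrR.le, hfun_strict H hr h⟩

lemma gInt_cont (H r R : ℝ) (hr : 0 < r) (hrR : r < R) :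
    Continuous (fun c => ∫ s in r..R, hfun H c s) := by
  have key : ∀ c, (∫ s in r..R, hfun H c s) =
      ∫ s in r..R, (H * s ^ 2 - c) / Real.sqrt (max (s ^ 2) (r ^ 2) + (H * s ^ 2 - c) ^ 2) := by
    intro c
    apply intervalIntegral.integral_congr
    intro s hs
    rw [uIcc_of_le hrR.le] at hs
    have h1 : r ^ 2 ≤ s ^ 2 := by nlinarith [hs.1]
    simp [hfun, max_eq_left h1]
  simp_rw [key]
  apply intervalIntegral.continuous_parametric_intervalIntegral_of_continuous'
  show Continuous fun p : ℝ × ℝ =>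
    (H * p.2 ^ 2 - p.1) / Real.sqrt (max (p.2 ^ 2) (r ^ 2) + (H * p.2 ^ 2 - p.1) ^ 2)
  apply Continuous.div (by fun_prop) (Real.continuous_sqrt.comp (by fun_prop))
  intro p
  have h2 : 0 < max (p.2 ^ 2) (r ^ 2) + (H * p.2 ^ 2 - p.1) ^ 2 := by
    have h3 := le_max_right (p.2 ^ 2) (r ^ 2)
    nlinarith [sq_nonneg (H * p.2 ^ 2 - p.1), pow_pos hr 2]
  exact (Real.sqrt_pos.2 h2).ne'

lemma gInt_zero (H r R : ℝ) (hr : 0 < r) (hrR : r < R) (hH : 0 < H) :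
    (∫ s in r..R, hfun H 0 s) =
      (Real.sqrt (1 + H ^ 2 * R ^ 2) - Real.sqrt (1 + H ^ 2 * r ^ 2)) / H := by
  have key : (∫ s in r..R, hfun H 0 s) =
      ∫ s in r..R, H * s / Real.sqrt (1 + H ^ 2 * s ^ 2) := by
    apply intervalIntegral.integral_congr
    intro s hs
    rw [uIcc_of_le hrR.le] at hs
    have hs0 : 0 < s := hr.trans_le hs.1
    have hss : s ^ 2 + (H * s ^ 2 - 0) ^ 2 = s ^ 2 * (1 + H ^ 2 * s ^ 2) := by ring
    have hsq : 0 < Real.sqrt (1 + H ^ 2 * s ^ 2) := Real.sqrt_pos.2 (by positivity)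
    rw [hfun, hss, Real.sqrt_mul (sq_nonneg s), Real.sqrt_sq hs0.le]
    field_simp
    ring
  rw [key]
  have hG : ∀ s : ℝ, HasDerivAt (fun t => Real.sqrt (1 + H ^ 2 * t ^ 2) / H)
      (H * s / Real.sqrt (1 + H ^ 2 * s ^ 2)) s := by
    intro s
    have h1 : HasDerivAt (fun t : ℝ => 1 + H ^ 2 * t ^ 2) (H ^ 2 * (2 * s)) s := by
      simpa using ((hasDerivAt_pow 2 s).const_mul (H ^ 2)).const_add 1
    have hpos : 0 < 1 + H ^ 2 * s ^ 2 := by positivity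
    have h2 := (h1.sqrt hpos.ne').div_const H
    refine h2.congr_deriv ?_
    have hsq : 0 < Real.sqrt (1 + H ^ 2 * s ^ 2) := Real.sqrt_pos.2 hpos
    field_simp
  rw [intervalIntegral.integral_eq_sub_of_hasDerivAt (fun s _ => hG s)]
  · ring
  · apply Continuous.intervalIntegrable
    apply Continuous.div (by fun_prop) (Real.continuous_sqrt.comp (by fun_prop))
    intro s
    exact (Real.sqrt_pos.2 (by positivity : (0:ℝ) < 1 + H ^ 2 * s ^ 2)).ne'

lemma key_ineq (r R d H : ℝ) (hr : 0 < r) (hrR : r < R) (h1 : 0 < d) (h2 : d < R - r)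
    (hH : 0 < H)
    (hH0 : H < 2 * d / Real.sqrt (((R - r) ^ 2 - d ^ 2) * ((R + r) ^ 2 - d ^ 2))) :
    (Real.sqrt (1 + H ^ 2 * R ^ 2) - Real.sqrt (1 + H ^ 2 * r ^ 2)) / H < d := by
  set P := ((R - r) ^ 2 - d ^ 2) * ((R + r) ^ 2 - d ^ 2) with hPd
  have hP : 0 < P := by
    have e1 : 0 < (R - r) ^ 2 - d ^ 2 := by nlinarith
    have e2 : 0 < (R + r) ^ 2 - d ^ 2 := by nlinarith
    exact mul_pos e1 e2
  have hsP : 0 < Real.sqrt P := Real.sqrt_pos.2 hP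
  have hH0' : H * Real.sqrt P < 2 * d := by
    rw [lt_div_iff₀ hsP] at hH0; linarith
  have hHP : H ^ 2 * P < 4 * d ^ 2 := by
    have hpos : 0 < 2 * d + H * Real.sqrt P := by
      have := mul_pos hH hsP; linarith
    nlinarith [mul_pos (sub_pos.2 hH0') hpos, Real.sq_sqrt hP.le]
  have hA2 : Real.sqrt (1 + H ^ 2 * R ^ 2) ^ 2 = 1 + H ^ 2 * R ^ 2 :=
    Real.sq_sqrt (by positivity)
  have hB2 : Real.sqrt (1 + H ^ 2 * r ^ 2) ^ 2 = 1 + H ^ 2 * r ^ 2 :=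
    Real.sq_sqrt (by positivity)
  have hA : 0 < Real.sqrt (1 + H ^ 2 * R ^ 2) := Real.sqrt_pos.2 (by positivity)
  have hB : 0 < Real.sqrt (1 + H ^ 2 * r ^ 2) := Real.sqrt_pos.2 (by positivity)
  set B := Real.sqrt (1 + H ^ 2 * r ^ 2)
  have step1 : H * (R ^ 2 - d ^ 2 - r ^ 2) < 2 * d * B := by
    rcases le_or_gt (R ^ 2 - d ^ 2 - r ^ 2) 0 with hc | hc
    · have h3 : 0 < 2 * d * B := by positivity
      nlinarith [mul_nonpos_of_nonneg_of_nonpos hH.le hc]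
    · refine lt_of_pow_lt_pow_left₀ 2 (by positivity) ?_
      have hexp : P = (R ^ 2 - d ^ 2 - r ^ 2) ^ 2 - 4 * d ^ 2 * r ^ 2 := by rw [hPd]; ring
      rw [mul_pow, mul_pow, hB2]
      nlinarith [hHP, sq_nonneg H]
  have step2 : Real.sqrt (1 + H ^ 2 * R ^ 2) < H * d + B := by
    refine lt_of_pow_lt_pow_left₀ 2 (by positivity) ?_
    rw [hA2]
    nlinarith [mul_lt_mul_of_pos_left step1 hH, hB2]
  rw [div_lt_iff₀ hH]
  nlinarith [step2]

lemma hfun_lb (H R : ℝ) {c s : ℝ} (hc : c < 0) (hs : 0 < s) (hsR : s ≤ R) (hH : 0 < H) :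
    1 - R ^ 2 / (2 * c ^ 2) ≤ hfun H c s := by
  have hx : 0 < H * s ^ 2 - c := by nlinarith
  have h1 : 1 - s ^ 2 / (2 * (H * s ^ 2 - c) ^ 2) ≤ hfun H c s :=
    psi_lower (by positivity) hx
  refine le_trans ?_ h1
  have hc2 : 0 < c ^ 2 := by nlinarith
  have hx2 : c ^ 2 ≤ (H * s ^ 2 - c) ^ 2 := by
    nlinarith [mul_nonneg (by nlinarith : (0:ℝ) ≤ H * s ^ 2)
      (by nlinarith : (0:ℝ) ≤ H * s ^ 2 - 2 * c)]
  have hs2 : s ^ 2 ≤ R ^ 2 := by nlinarith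
  have hdd : s ^ 2 / (2 * (H * s ^ 2 - c) ^ 2) ≤ R ^ 2 / (2 * c ^ 2) :=
    div_le_div₀ (sq_nonneg R) hs2 (by linarith) (by linarith)
  linarith

lemma main_aux (r R d H : ℝ) (hr : 0 < r) (hrR : r < R)
    (h1 : 0 < d) (h2 : d < R - r) (hH : 0 < H)
    (hH0 : H < 2 * d / Real.sqrt (((R - r) ^ 2 - d ^ 2) * ((R + r) ^ 2 - d ^ 2))) :
    ∃! c : ℝ, c < 0 ∧ (∫ s in r..R, hfun H c s) = d := by
  have hcont : Continuous (fun c => ∫ s in r..R, hfun H c s) := gInt_cont H r R hr hrR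
  have hg0 : (∫ s in r..R, hfun H 0 s) < d := by
    rw [gInt_zero H r R hr hrR hH]
    exact key_ineq r R d H hr hrR h1 h2 hH hH0
  set K := R ^ 2 * (R - r) / (2 * ((R - r) - d)) with hK
  have hKpos : 0 < K := by
    have hR : 0 < R := hr.trans hrR
    exact div_pos (mul_pos (pow_pos hR 2) (by linarith)) (by linarith)
  set c₁ : ℝ := -(1 + K) with hc₁d
  have hc₁ : c₁ < 0 := by rw [hc₁d]; linarith
  have hc₁sq : K < c₁ ^ 2 := by rw [hc₁d]; nlinarith
  have hgc₁ : d < ∫ s in r..R, hfun H c₁ s := by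
    have hc₁2 : 0 < c₁ ^ 2 := by nlinarith
    have hm : ∀ s ∈ Icc r R, (1 - R ^ 2 / (2 * c₁ ^ 2)) ≤ hfun H c₁ s := fun s hs =>
      hfun_lb H R hc₁ (hr.trans_le hs.1) hs.2 hH
    have hint : (∫ _ in r..R, (1 - R ^ 2 / (2 * c₁ ^ 2))) ≤ ∫ s in r..R, hfun H c₁ s :=
      intervalIntegral.integral_mono_on hrR.le intervalIntegrable_const
        ((hfun_contOn_s13 H c₁ r R hr).intervalIntegrable_of_Icc hrR.le) hm
    rw [intervalIntegral.integral_const, smul_eq_mul] at hint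
    have key2 : R ^ 2 * (R - r) < ((R - r) - d) * (2 * c₁ ^ 2) := by
      have hKe : K * (2 * ((R - r) - d)) = R ^ 2 * (R - r) := by
        rw [hK]
        exact div_mul_cancel₀ _ (by linarith : 2 * ((R - r) - d) ≠ 0)
      nlinarith [(show (0:ℝ) < (R - r) - d by linarith)]
    have h3 : (R - r) * (R ^ 2 / (2 * c₁ ^ 2)) < (R - r) - d := by
      rw [mul_div_assoc'] at *
      rw [div_lt_iff₀ (by linarith : (0:ℝ) < 2 * c₁ ^ 2)]
      nlinarith [key2]
    nlinarith [hint]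
  have hsub : d ∈ (fun c => ∫ s in r..R, hfun H c s) '' Ioo c₁ 0 :=
    intermediate_value_Ioo' hc₁.le hcont.continuousOn ⟨hg0, hgc₁⟩
  obtain ⟨c, hcmem, hgc'⟩ := hsub
  have hgc : (∫ s in r..R, hfun H c s) = d := hgc'
  refine ⟨c, ⟨hcmem.2, hgc⟩, ?_⟩
  rintro c' ⟨hc'neg, hgcc'⟩
  rcases lt_trichotomy c' c with h | h | h
  · have := gInt_anti H r R hr hrR h
    rw [hgc, hgcc'] at this
    exact absurd this (lt_irrefl d)
  · exact h
  · have := gInt_anti H r R hr hrR h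
    rw [hgc, hgcc'] at this
    exact absurd this (lt_irrefl d)

/-- Proposition for `c < 0`: let `0 < r < R` and `0 < b − a < R − r`, and let
`H₀ = 2(b − a)/√(((R − r)² − (b − a)²)·((R + r)² − (b − a)²))`.  Then for every `H` with
`0 < H < H₀` there exists a unique `c < 0` such that the profile `f(t; H, c)` with `f(r) = a`
satisfies `f(R; H, c) = b`: there is a unique rotational spacelike surface with constant mean
curvature `H`, corresponding to a negative first-integral constant `c`, spanning `Γ(r, a)`
and `Γ(R, b)`. -/
theorem existence_negative_c (r R a b H : ℝ) (hr : 0 < r) (hrR : r < R)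
    (h1 : 0 < b - a) (h2 : b - a < R - r) (hH : 0 < H)
    (hH0 : H < 2 * (b - a) /
      Real.sqrt (((R - r) ^ 2 - (b - a) ^ 2) * ((R + r) ^ 2 - (b - a) ^ 2))) :
    ∃! c : ℝ, c < 0 ∧ ffun H c r a R = b := by
  obtain ⟨c, ⟨hcneg, hci⟩, huniq⟩ := main_aux r R (b - a) H hr hrR h1 h2 hH hH0
  refine ⟨c, ⟨hcneg, ?_⟩, ?_⟩
  · rw [ffun, hci]; ring
  · rintro c' ⟨h1', h2'⟩
    apply huniq
    refine ⟨h1', ?_⟩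
    rw [ffun] at h2'
    linarith
end

section
/- Let H > 0 and c > 0. Then the map t ↦ h(t; H, c) is strictly increasing on (0, ∞) and vanishes exactly at t = √(c/H), being negative for 0 < t < √(c/H) and positive for t > √(c/H). Consequently, the profile function f(t; H, c) is strictly convex in the sense that it is strictly decreasing on (0, √(c/H)) and strictly increasing on (√(c/H), ∞), attaining a unique global minimum at t = √(c/H). In particular, if r < √(c/H) < R, the corresponding rotational surface spanning circles in the planes x₃ = f(r) and x₃ = f(R) is not contained in the slab determined by its boundary planes. -/
open Real MeasureTheory Filter Set

lemma phi_strictMono : StrictMono (fun x : ℝ => x / Real.sqrt (1 + x ^ 2)) := by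
  intro a b hab
  have hA : 0 < Real.sqrt (1 + a ^ 2) := Real.sqrt_pos.mpr (by positivity)
  have hB : 0 < Real.sqrt (1 + b ^ 2) := Real.sqrt_pos.mpr (by positivity)
  have hA2 : Real.sqrt (1 + a ^ 2) ^ 2 = 1 + a ^ 2 := Real.sq_sqrt (by positivity)
  have hB2 : Real.sqrt (1 + b ^ 2) ^ 2 = 1 + b ^ 2 := Real.sq_sqrt (by positivity)
  simp only
  rw [div_lt_div_iff₀ hA hB]
  rcases le_or_gt 0 a with ha | ha
  · have hb : 0 < b := lt_of_le_of_lt ha hab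
    have h1 : (a * Real.sqrt (1 + b ^ 2)) ^ 2 < (b * Real.sqrt (1 + a ^ 2)) ^ 2 := by
      nlinarith
    exact lt_of_pow_lt_pow_left₀ 2 (by positivity) h1
  · rcases le_or_gt b 0 with hb | hb
    · have h1 : ((-b) * Real.sqrt (1 + a ^ 2)) ^ 2 < ((-a) * Real.sqrt (1 + b ^ 2)) ^ 2 := by
        nlinarith
      have h2 := lt_of_pow_lt_pow_left₀ 2 (by nlinarith) h1
      nlinarith
    · have h1 : a * Real.sqrt (1 + b ^ 2) < 0 := mul_neg_of_neg_of_pos ha hB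
      have h2 : 0 < b * Real.sqrt (1 + a ^ 2) := mul_pos hb hA
      linarith

lemma denom_pos (H c : ℝ) (hc : 0 < c) (t : ℝ) : 0 < t ^ 2 + (H * t ^ 2 - c) ^ 2 := by
  rcases eq_or_ne t 0 with rfl | h
  · have : (0:ℝ) ^ 2 + (H * 0 ^ 2 - c) ^ 2 = c ^ 2 := by ring
    rw [this]; positivity
  · positivity

lemma hfun_eq (H c t : ℝ) (ht : 0 < t) :
    hfun H c t = (H * t - c / t) / Real.sqrt (1 + (H * t - c / t) ^ 2) := by
  unfold hfun
  have h1 : t ^ 2 + (H * t ^ 2 - c) ^ 2 = t ^ 2 * (1 + (H * t - c / t) ^ 2) := by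
    field_simp
  have h2 : H * t ^ 2 - c = t * (H * t - c / t) := by field_simp
  rw [h1, h2, Real.sqrt_mul (sq_nonneg t), Real.sqrt_sq ht.le,
    mul_div_mul_left _ _ ht.ne']

lemma hfun_cont (H c : ℝ) (hc : 0 < c) : Continuous (hfun H c) := by
  unfold hfun
  apply Continuous.div (by continuity) (Continuous.sqrt (by continuity))
  intro t
  exact (Real.sqrt_pos.mpr (denom_pos H c hc t)).ne'

/-- Let `H > 0` and `c > 0`.  Then `t ↦ h(t; H, c)` is strictly increasing on `(0, ∞)` and
vanishes exactly at `t = √(c/H)`, being negative for `0 < t < √(c/H)` and positive for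
`t > √(c/H)`.  Consequently, the profile `f(t; H, c)` is strictly decreasing on `(0, √(c/H))`,
strictly increasing on `(√(c/H), ∞)`, and attains a unique global minimum at `t = √(c/H)`.
In particular, if `r < √(c/H) < R`, the corresponding rotational surface spanning circles in
the planes `x₃ = f(r)` and `x₃ = f(R)` is not contained in the slab determined by its
boundary planes. -/
theorem convex_profile_positive_c (H c : ℝ) (hH : 0 < H) (hc : 0 < c) :
    StrictMonoOn (hfun H c) (Set.Ioi 0) ∧
    hfun H c (Real.sqrt (c / H)) = 0 ∧
    (∀ t : ℝ, 0 < t → t < Real.sqrt (c / H) → hfun H c t < 0) ∧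
    (∀ t : ℝ, Real.sqrt (c / H) < t → 0 < hfun H c t) ∧
    (∀ r a : ℝ, 0 < r →
      StrictAntiOn (ffun H c r a) (Set.Ioc 0 (Real.sqrt (c / H))) ∧
      StrictMonoOn (ffun H c r a) (Set.Ici (Real.sqrt (c / H))) ∧
      (∀ t : ℝ, 0 < t → t ≠ Real.sqrt (c / H) →
        ffun H c r a (Real.sqrt (c / H)) < ffun H c r a t)) := by
  set t0 := Real.sqrt (c / H) with ht0def
  have ht0pos : 0 < t0 := Real.sqrt_pos.mpr (div_pos hc hH)
  have ht0sq : t0 ^ 2 = c / H := Real.sq_sqrt (div_pos hc hH).le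
  -- strict monotonicity of hfun on (0, ∞)
  have hmono : StrictMonoOn (hfun H c) (Set.Ioi 0) := by
    intro t1 h1 t2 h2 h12
    rw [Set.mem_Ioi] at h1 h2
    rw [hfun_eq H c t1 h1, hfun_eq H c t2 h2]
    apply phi_strictMono
    have hdiv : c / t2 < c / t1 := div_lt_div_of_pos_left hc h1 h12
    have hmul : H * t1 < H * t2 := mul_lt_mul_of_pos_left h12 hH
    linarith
  -- vanishing at t0
  have hzero : hfun H c t0 = 0 := by
    unfold hfun
    have : H * t0 ^ 2 - c = 0 := by
      rw [ht0sq]; field_simp; ring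
    rw [this]; simp
  -- negativity
  have hneg : ∀ t : ℝ, 0 < t → t < t0 → hfun H c t < 0 := by
    intro t ht htlt
    have hsq : t ^ 2 < t0 ^ 2 := by nlinarith
    rw [ht0sq] at hsq
    have hnum : H * t ^ 2 - c < 0 := by
      have := (lt_div_iff₀ hH).mp hsq
      nlinarith
    exact div_neg_of_neg_of_pos hnum (Real.sqrt_pos.mpr (denom_pos H c hc t))
  -- positivity
  have hpos : ∀ t : ℝ, t0 < t → 0 < hfun H c t := by
    intro t htgt
    have hsq : t0 ^ 2 < t ^ 2 := by nlinarith
    rw [ht0sq] at hsq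
    have hnum : 0 < H * t ^ 2 - c := by
      have := (div_lt_iff₀ hH).mp hsq
      nlinarith
    exact div_pos hnum (Real.sqrt_pos.mpr (denom_pos H c hc t))
  refine ⟨hmono, hzero, hneg, hpos, ?_⟩
  intro r a hr
  have hcont := hfun_cont H c hc
  have hderiv : ∀ t : ℝ, HasDerivAt (ffun H c r a) (hfun H c t) t := by
    intro t
    have h1 : HasDerivAt (fun u => ∫ s in r..u, hfun H c s) (hfun H c t) t :=
      intervalIntegral.integral_hasDerivAt_right (hcont.intervalIntegrable r t)
        (hcont.stronglyMeasurableAtFilter _ _) hcont.continuousAt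
    exact h1.const_add a
  have hf_diff : Differentiable ℝ (ffun H c r a) := fun t => (hderiv t).differentiableAt
  have hf_cont : Continuous (ffun H c r a) := hf_diff.continuous
  have hanti : StrictAntiOn (ffun H c r a) (Set.Ioc 0 t0) := by
    apply strictAntiOn_of_deriv_neg (convex_Ioc 0 t0) hf_cont.continuousOn
    intro x hx
    rw [interior_Ioc] at hx
    rw [(hderiv x).deriv]
    exact hneg x hx.1 hx.2
  have hmono' : StrictMonoOn (ffun H c r a) (Set.Ici t0) := by
    apply strictMonoOn_of_deriv_pos (convex_Ici t0) hf_cont.continuousOn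
    intro x hx
    rw [interior_Ici] at hx
    rw [(hderiv x).deriv]
    exact hpos x hx
  refine ⟨hanti, hmono', ?_⟩
  intro t ht htne
  rcases lt_or_gt_of_ne htne with hlt | hgt
  · exact hanti ⟨ht, hlt.le⟩ ⟨ht0pos, le_refl _⟩ hlt
  · exact hmono' (Set.self_mem_Ici) hgt.le hgt
end
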